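/- Let V be an irreducible highest weight 𝔤-module with highest weight λ relative to a Borel 𝔟, let 𝔤 = 𝔨 + 𝔟^− where 𝔟^− is the opposite Borel, and let f_− ∈ V^* be a lowest-weight functional (annihilated by 𝔟^− acting contragrediently). If v ∈ V^𝔨 is a nonzero 𝔨-invariant vector, then ⟨v, f_−⟩ ≠ 0. -/
import Mathlib

/-- Iterated brackets of `v` by elements of a set `B`. -/
inductive st18Gen {g V : Type*} [LieRing g] [AddCommGroup V] [LieRingModule g V]
    (B : Set g) (v : V) : V → Prop
  | base : st18Gen B v v
  | br {b : g} (hb : b ∈ B) {w : V} (h : st18Gen B v w) : st18Gen B v ⁅b, w⁆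

/-- Let `V` be an irreducible `𝔤`-module, `𝔤 = 𝔨 + 𝔟⁻`, and `f₋ ∈ V^*` a functional
annihilated by `𝔟⁻` in the contragredient action (`(X.f)(w) = −f(X.w) = 0`). If
`v` is a nonzero `𝔨`-invariant vector, then `⟨v, f₋⟩ ≠ 0`. -/
theorem statement18 (g : Type*) [LieRing g] [LieAlgebra ℂ g]
    (k bminus : LieSubalgebra ℂ g)
    (hdecomp : ∀ x : g, ∃ a ∈ k, ∃ b ∈ bminus, x = a + b)
    (V : Type*) [AddCommGroup V] [Module ℂ V] [LieRingModule g V] [LieModule ℂ g V]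
    (hirr : ∀ N : LieSubmodule ℂ g V, N = ⊥ ∨ N = ⊤)
    (f : V →ₗ[ℂ] ℂ) (hf : f ≠ 0)
    (hflow : ∀ x ∈ bminus, ∀ w : V, f ⁅x, w⁆ = 0)
    (v : V) (hv : v ≠ 0) (hvk : ∀ x ∈ k, ⁅x, v⁆ = 0) :
    f v ≠ 0 := by
  intro hfv
  set S : Set V := {w | st18Gen (bminus : Set g) v w} with hS
  -- span S is stable under brackets with elements of bminus
  have hbstable : ∀ b ∈ bminus, ∀ u ∈ Submodule.span ℂ S, ⁅b, u⁆ ∈ Submodule.span ℂ S := by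
    intro b hb u hu
    induction hu using Submodule.span_induction with
    | mem w hw => exact Submodule.subset_span (st18Gen.br hb hw)
    | zero => simpa using Submodule.zero_mem _
    | add w₁ w₂ _ _ h1 h2 => simpa [lie_add] using Submodule.add_mem _ h1 h2
    | smul c w _ h1 => simpa [lie_smul] using Submodule.smul_mem _ c h1
  -- span S is stable under brackets with arbitrary elements of g
  have key : ∀ w, st18Gen (bminus : Set g) v w → ∀ x : g,
      ⁅x, w⁆ ∈ Submodule.span ℂ S := by
    intro w hw
    induction hw with
    | base =>
      intro x
      obtain ⟨a, ha, b, hb, rfl⟩ := hdecomp x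
      have : ⁅a + b, v⁆ = ⁅(b : g), v⁆ := by rw [add_lie, hvk a ha, zero_add]
      rw [this]
      exact Submodule.subset_span (st18Gen.br hb st18Gen.base)
    | br hb h ih =>
      intro x
      rename_i b' w'
      have hleib : ⁅x, ⁅b', w'⁆⁆ = ⁅⁅x, b'⁆, w'⁆ + ⁅b', ⁅x, w'⁆⁆ := leibniz_lie x b' w'
      rw [hleib]
      exact Submodule.add_mem _ (ih _) (hbstable b' hb _ (ih x))
  -- so span S is a Lie submodule
  let N : LieSubmodule ℂ g V :=
    { Submodule.span ℂ S with
      lie_mem := by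
        intro x m hm
        induction hm using Submodule.span_induction with
        | mem w hw => exact key w hw x
        | zero => simpa using Submodule.zero_mem _
        | add w₁ w₂ _ _ h1 h2 => simpa [lie_add] using Submodule.add_mem _ h1 h2
        | smul c w _ h1 => simpa [lie_smul] using Submodule.smul_mem _ c h1 }
  have hvN : v ∈ N := Submodule.subset_span st18Gen.base
  have hNtop : N = ⊤ := by
    rcases hirr N with hbot | htop
    · exact absurd (hbot ▸ hvN) (by simpa [LieSubmodule.mem_bot] using hv)
    · exact htop
  -- f vanishes on S, hence on N = ⊤
  have hfS : ∀ w ∈ S, f w = 0 := by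
    intro w hw
    induction hw with
    | base => exact hfv
    | br hb h ih => exact hflow _ hb _
  have hfN : ∀ w, w ∈ Submodule.span ℂ S → f w = 0 := by
    intro w hw
    induction hw using Submodule.span_induction with
    | mem w hw => exact hfS w hw
    | zero => simp
    | add w₁ w₂ _ _ h1 h2 => simp [h1, h2]
    | smul c w _ h1 => simp [h1]
  apply hf
  ext w
  have hwN : w ∈ N := hNtop ▸ LieSubmodule.mem_top w
  simpa using hfN w hwN
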